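/- arXiv:math/0306125 — 2 statements merged into one kernel-verified Lean document; each statement's English description precedes it below -/
import Mathlib

section
/- Let r ≥ 0 and let D = ABC be a Dyck word, where B is a Dyck word and length(A) = length(C) + 2r. Then Ψ_r(ABC) = Ψ_r(AC)·Ψ_0(B) (concatenation of words). -/
attribute [local instance] Classical.propDecidable

namespace DyckBij

/-- A word over `Bool` (`true` = up-step `u`, `false` = down-step `d`) is a Dyck word:
equally many `u`'s and `d`'s, and every prefix has at least as many `u`'s as `d`'s. -/
def IsDyck (w : List Bool) : Prop :=
  w.count false = w.count true ∧
    ∀ p : List Bool, p <+: w → p.count false ≤ p.count true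

/-- `Matched w i j`: the `u` at (0-indexed) position `i` of `w` is matched (as in matched
parentheses) with the `d` at position `j`, i.e. `w = A u B d C` with `B` a Dyck word,
`|A| = i` and `j = i + |B| + 1`. -/
def Matched (w : List Bool) (i j : ℕ) : Prop :=
  ∃ A B C : List Bool, IsDyck B ∧ w = A ++ true :: (B ++ false :: C) ∧
    A.length = i ∧ j = i + B.length + 1

/-- Positions `i` and `j` form a matched pair of steps of `w`. -/
def MatchPair (w : List Bool) (i j : ℕ) : Prop :=
  Matched w i j ∨ Matched w j i

/-- The 0-indexed reading order `σ^{(r)}` on a word of length `L`: the first `2r` positions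
are read in order, and the remaining positions are read in zigzag
`2r, L-1, 2r+1, L-2, …` (0-indexed). For `r = 0` this is the zigzag order `σ`. -/
def zigR (r L p : ℕ) : ℕ :=
  if p < 2 * r then p
  else if p % 2 = 0 then p / 2 + r
  else L + r - (p + 1) / 2

/-- The bijection `Ψ_r`: the `p`-th letter of `Ψ_r(w)` is `u` iff the match of the
`σ^{(r)}_p`-th step of `w` does not occur among the previously read steps
`σ^{(r)}_0, …, σ^{(r)}_{p-1}`. -/
noncomputable def psiR (r : ℕ) (w : List Bool) : List Bool :=
  List.ofFn fun p : Fin w.length =>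
    if ∃ p' : ℕ, p' < (p : ℕ) ∧
        MatchPair w (zigR r w.length p') (zigR r w.length (p : ℕ))
    then false else true

/-- The bijection `Ψ = Ψ_0`. -/
noncomputable def psi : List Bool → List Bool := psiR 0

/-- Number of tunnels of `w` with `|A| = |C| + 2r` (midpoint at `x = n + r`),
i.e. decompositions `w = A u B d C` with `B` a Dyck word; tunnels are indexed by `|A|`. -/
noncomputable def tunEq (r : ℕ) (w : List Bool) : ℕ :=
  {i : ℕ | ∃ A B C : List Bool, IsDyck B ∧ w = A ++ true :: (B ++ false :: C) ∧
    A.length = i ∧ A.length = C.length + 2 * r}.ncard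

/-- Number of tunnels of `w` with `|A| > |C| + 2r` (midpoint in `x > n + r`). -/
noncomputable def tunGt (r : ℕ) (w : List Bool) : ℕ :=
  {i : ℕ | ∃ A B C : List Bool, IsDyck B ∧ w = A ++ true :: (B ++ false :: C) ∧
    A.length = i ∧ C.length + 2 * r < A.length}.ncard

/-- Number of tunnels of `w` with `|A| ≤ |C| + 2r` (midpoint in `x ≤ n + r`). -/
noncomputable def tunLe (r : ℕ) (w : List Bool) : ℕ :=
  {i : ℕ | ∃ A B C : List Bool, IsDyck B ∧ w = A ++ true :: (B ++ false :: C) ∧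
    A.length = i ∧ A.length ≤ C.length + 2 * r}.ncard

/-- Number of centered tunnels `ct(w)`. -/
noncomputable def ctun (w : List Bool) : ℕ := tunEq 0 w

/-- Number of right tunnels `rt(w)`. -/
noncomputable def rtun (w : List Bool) : ℕ := tunGt 0 w

/-- Number of left tunnels `lt(w)`: tunnels with `|A| < |C|`. -/
noncomputable def ltun (w : List Bool) : ℕ :=
  {i : ℕ | ∃ A B C : List Bool, IsDyck B ∧ w = A ++ true :: (B ++ false :: C) ∧
    A.length = i ∧ A.length < C.length}.ncard

/-- Number of multitunnels of `w` with `|A| = |C| + 2r` (midpoint at `x = n + r`):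
decompositions `w = A B C` with `B` a nonempty Dyck word, indexed by `(|A|, |B|)`. -/
noncomputable def mtunEq (r : ℕ) (w : List Bool) : ℕ :=
  {q : ℕ × ℕ | ∃ A B C : List Bool, IsDyck B ∧ B ≠ [] ∧ w = A ++ B ++ C ∧
    A.length = q.1 ∧ B.length = q.2 ∧ A.length = C.length + 2 * r}.ncard

/-- Number of centered multitunnels `cmt(w)`. -/
noncomputable def cmtun (w : List Bool) : ℕ := mtunEq 0 w

/-- Number of hills `h(w)`: decompositions `w = X u d Y` with `X, Y` Dyck words. -/
noncomputable def numHills (w : List Bool) : ℕ :=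
  {i : ℕ | ∃ X Y : List Bool, IsDyck X ∧ IsDyck Y ∧
    w = X ++ true :: false :: Y ∧ X.length = i}.ncard

/-- Number of hills of `w` lying in `x > 2r`, i.e. with `|X| ≥ 2r`. -/
noncomputable def numHillsAfter (r : ℕ) (w : List Bool) : ℕ :=
  {i : ℕ | ∃ X Y : List Bool, IsDyck X ∧ IsDyck Y ∧
    w = X ++ true :: false :: Y ∧ X.length = i ∧ 2 * r ≤ X.length}.ncard

/-- Number of arches (equivalently, returns) `ret(w)`: decompositions
`w = X (u B d) Y` with `X, B, Y` Dyck words. -/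
noncomputable def numArches (w : List Bool) : ℕ :=
  {i : ℕ | ∃ X B Y : List Bool, IsDyck X ∧ IsDyck B ∧ IsDyck Y ∧
    w = X ++ true :: (B ++ false :: Y) ∧ X.length = i}.ncard

/-- Number of arches of `w` lying in `x ≥ 2r`, i.e. with `|X| ≥ 2r`. -/
noncomputable def numArchesAfter (r : ℕ) (w : List Bool) : ℕ :=
  {i : ℕ | ∃ X B Y : List Bool, IsDyck X ∧ IsDyck B ∧ IsDyck Y ∧
    w = X ++ true :: (B ++ false :: Y) ∧ X.length = i ∧ 2 * r ≤ X.length}.ncard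

/-- Number of odd rises `odr(w)`: `u`-steps at odd 1-indexed positions
(even 0-indexed positions). -/
noncomputable def oddRises (w : List Bool) : ℕ :=
  {p : ℕ | p < w.length ∧ p % 2 = 0 ∧ w.getD p false = true}.ncard

/-- Number of even rises `er(w)`: `u`-steps at even 1-indexed positions
(odd 0-indexed positions). -/
noncomputable def evenRises (w : List Bool) : ℕ :=
  {p : ℕ | p < w.length ∧ p % 2 = 1 ∧ w.getD p false = true}.ncard

/-- Number of odd rises of `w` at 1-indexed positions `> 2r`. -/
noncomputable def oddRisesAfter (r : ℕ) (w : List Bool) : ℕ :=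
  {p : ℕ | p < w.length ∧ p % 2 = 0 ∧ 2 * r ≤ p ∧ w.getD p false = true}.ncard

/-- Number of even rises of `w` at 1-indexed positions `> 2r`. -/
noncomputable def evenRisesAfter (r : ℕ) (w : List Bool) : ℕ :=
  {p : ℕ | p < w.length ∧ p % 2 = 1 ∧ 2 * r ≤ p ∧ w.getD p false = true}.ncard

/-- Number of `u`-steps of `w` at 1-indexed positions `≤ 2r`. -/
noncomputable def upstepsBefore (r : ℕ) (w : List Bool) : ℕ :=
  {p : ℕ | p < w.length ∧ p < 2 * r ∧ w.getD p false = true}.ncard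

/-- Number of peaks of `w`: occurrences of the factor `u d`. -/
noncomputable def numPeaks (w : List Bool) : ℕ :=
  {i : ℕ | i + 2 ≤ w.length ∧ w.getD i false = true ∧ w.getD (i + 1) true = false}.ncard

/-- Number of occurrences in `w` of a factor of length 3 beginning with `u`
and ending with `d` (occurrences of `u⋆d`). -/
noncomputable def numUStarD (w : List Bool) : ℕ :=
  {i : ℕ | i + 3 ≤ w.length ∧ w.getD i false = true ∧ w.getD (i + 2) true = false}.ncard

/-- `ih(w)`: 1 if `w` begins with the factor `u d`, else 0. -/
noncomputable def initHill (w : List Bool) : ℕ :=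
  if w.take 2 = [true, false] then 1 else 0

/-- `fh(w)`: 1 if `w = X u d` with `X` a Dyck word, else 0. -/
noncomputable def finHill (w : List Bool) : ℕ :=
  if ∃ X : List Bool, IsDyck X ∧ w = X ++ [true, false] then 1 else 0

/-- `π` avoids the pattern 321. -/
def Avoids321 {n : ℕ} (π : Equiv.Perm (Fin n)) : Prop :=
  ¬ ∃ i j k : Fin n, i < j ∧ j < k ∧ π k < π j ∧ π j < π i

/-- `π` avoids the pattern 132. -/
def Avoids132 {n : ℕ} (π : Equiv.Perm (Fin n)) : Prop :=
  ¬ ∃ i j k : Fin n, i < j ∧ j < k ∧ π i < π k ∧ π k < π j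

/-- Number of fixed points of `π`. -/
noncomputable def fixedPts {n : ℕ} (π : Equiv.Perm (Fin n)) : ℕ :=
  {i : Fin n | π i = i}.ncard

/-- Number of excedances of `π`. -/
noncomputable def excedances {n : ℕ} (π : Equiv.Perm (Fin n)) : ℕ :=
  {i : Fin n | i < π i}.ncard

/-- Number of descents of `π`. -/
noncomputable def descents {n : ℕ} (π : Equiv.Perm (Fin n)) : ℕ :=
  {i : ℕ | ∃ (h1 : i < n) (h2 : i + 1 < n), π ⟨i + 1, h2⟩ < π ⟨i, h1⟩}.ncard

/-- `α_r(π) = #{i : π(i) = i + r}` (stated 0-indexed, equivalent to the 1-indexed version). -/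
noncomputable def alphaStat {n : ℕ} (r : ℕ) (π : Equiv.Perm (Fin n)) : ℕ :=
  {i : Fin n | (π i : ℕ) = (i : ℕ) + r}.ncard

/-- `β_r(π) = #{i : i > r, π(i) = i}` (for 1-indexed `i`; 0-indexed this is `r ≤ i`). -/
noncomputable def betaStat {n : ℕ} (r : ℕ) (π : Equiv.Perm (Fin n)) : ℕ :=
  {i : Fin n | r ≤ (i : ℕ) ∧ π i = i}.ncard

/-! In terms of the height function of a path, the `u` at `i` is matched with the `d` at `j`
iff the path comes back at `j + 1` to its height at `i` and stays strictly above it in between.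
Inserting a Dyck word `B` into `A ++ C` at position `|A|` therefore keeps the matched pairs of
`A ++ C` (positions from `|A|` on moved up by `|B|`), adds those of `B`, and creates no pair
between `B` and the rest. Because `|A| = |C| + 2r`, the order `σ^{(r)}` on `ABC` first visits the
positions of `A` and `C` exactly as `σ^{(r)}` does on `AC`, and then the positions of `B` in the
zigzag order `σ`; comparing letter by letter gives `Ψ_r(ABC) = Ψ_r(AC) · Ψ(B)`. -/

def height (w : List Bool) (k : ℕ) : ℤ :=
  ((w.take k).count true : ℤ) - (w.take k).count false

@[simp] lemma height_zero (w : List Bool) : height w 0 = 0 := by simp [height]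

lemma height_cons_succ (b : Bool) (w : List Bool) (k : ℕ) :
    height (b :: w) (k + 1) = (if b then 1 else -1) + height w k := by
  cases b <;> simp [height] <;> ring

lemma height_append_of_le {x : List Bool} (y : List Bool) {k : ℕ} (hk : k ≤ x.length) :
    height (x ++ y) k = height x k := by
  simp [height, List.take_append_of_le_length hk]

lemma height_append_length_add (x y : List Bool) (m : ℕ) :
    height (x ++ y) (x.length + m) = height x x.length + height y m := by
  simp [height, List.take_append, List.count_append, List.take_of_length_le]
  ring

lemma height_of_length_le {w : List Bool} {k : ℕ} (hk : w.length ≤ k) :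
    height w k = height w w.length := by
  simp [height, List.take_of_length_le hk]

lemma height_succ {w : List Bool} {k : ℕ} (hk : k < w.length) :
    height w (k + 1) = height w k + if w[k] then 1 else -1 := by
  rw [height, height, List.take_add_one, List.getElem?_eq_getElem hk]
  cases w[k] <;> simp <;> ring

lemma isDyck_iff_height (w : List Bool) :
    IsDyck w ↔ height w w.length = 0 ∧ ∀ k, 0 ≤ height w k := by
  simp only [IsDyck, height, List.take_length]
  constructor
  · rintro ⟨hcount, hprefix⟩
    exact ⟨by omega, fun k => by have := hprefix _ (w.take_prefix k); omega⟩
  · rintro ⟨hcount, hprefix⟩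
    refine ⟨by omega, fun p hp => ?_⟩
    rw [List.prefix_iff_eq_take] at hp
    have := hprefix p.length
    rw [← hp] at this
    omega

section Tunnel
variable (A B C : List Bool)

lemma height_tunnel_inside {m : ℕ} (hm : m ≤ B.length) :
    height (A ++ true :: (B ++ false :: C)) (A.length + (m + 1)) =
      height A A.length + 1 + height B m := by
  rw [height_append_length_add, height_cons_succ, height_append_of_le _ hm]
  simp only [if_true]
  ring

lemma height_tunnel_end :
    height (A ++ true :: (B ++ false :: C)) (A.length + (B.length + 2)) =
      height A A.length + height B B.length := by
  rw [height_append_length_add, height_cons_succ, height_append_length_add, height_cons_succ]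
  simp

end Tunnel

lemma _root_.List.eq_take_append_cons_append_cons {α : Type*} {w : List α} {i j : ℕ} (hij : i < j)
    (hj : j < w.length) :
    w = w.take i ++ w[i] :: ((w.drop (i + 1)).take (j - i - 1) ++ w[j] :: w.drop (j + 1)) := by
  have hdrop : (w.drop (i + 1)).drop (j - i - 1) = w[j] :: w.drop (j + 1) := by
    rw [List.drop_drop, show i + 1 + (j - i - 1) = j by omega, List.drop_eq_getElem_cons hj]
  rw [← hdrop, List.take_append_drop, ← List.drop_eq_getElem_cons, List.take_append_drop]

lemma matched_iff_height {w : List Bool} {i j : ℕ} :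
    Matched w i j ↔ i < j ∧ j < w.length ∧ height w (j + 1) = height w i ∧
      ∀ k, i < k → k ≤ j → height w i < height w k := by
  constructor
  · rintro ⟨A, B, C, hB, rfl, rfl, rfl⟩
    obtain ⟨hB0, hBnonneg⟩ := (isDyck_iff_height B).mp hB
    have hbase : height (A ++ true :: (B ++ false :: C)) A.length = height A A.length :=
      height_append_of_le _ le_rfl
    refine ⟨by omega, by simp; omega, ?_, fun k hk hk' => ?_⟩
    · rw [hbase, show A.length + B.length + 1 + 1 = A.length + (B.length + 2) by omega,
        height_tunnel_end, hB0, add_zero]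
    · obtain ⟨m, rfl⟩ : ∃ m, k = A.length + (m + 1) := ⟨k - A.length - 1, by omega⟩
      rw [hbase, height_tunnel_inside _ _ _ (by omega)]
      linarith [hBnonneg m]
  · rintro ⟨hij, hj, hend, hmin⟩
    have hup : w[i] = true := by
      have := hmin (i + 1) (by omega) (by omega)
      rw [height_succ (by omega)] at this
      cases h : w[i]
      · simp [h] at this
      · rfl
    have hdown : w[j] = false := by
      have := hmin j hij le_rfl
      rw [height_succ hj] at hend
      cases h : w[j]
      · rfl
      · simp only [h, if_true] at hend
        omega
    have hw := List.eq_take_append_cons_append_cons hij hj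
    rw [hup, hdown] at hw
    obtain ⟨A, B, C, rfl, rfl, hB⟩ : ∃ A B C : List Bool, w = A ++ true :: (B ++ false :: C) ∧
        A.length = i ∧ B.length = j - i - 1 :=
      ⟨_, _, _, hw, by simp; omega, by simp; omega⟩
    refine ⟨A, B, C, ?_, rfl, rfl, by omega⟩
    have hbase : height (A ++ true :: (B ++ false :: C)) A.length = height A A.length :=
      height_append_of_le _ le_rfl
    have hB0 : height B B.length = 0 := by
      have := height_tunnel_end A B C
      rw [show A.length + (B.length + 2) = j + 1 by omega] at this
      linarith
    refine (isDyck_iff_height B).mpr ⟨hB0, fun k => ?_⟩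
    rcases le_or_gt k B.length with hk | hk
    · have := hmin (A.length + (k + 1)) (by omega) (by omega)
      rw [hbase, height_tunnel_inside _ _ _ hk] at this
      linarith
    · rw [height_of_length_le hk.le, hB0]

/-- Where a position of `A ++ C` lands in `A ++ B ++ C`, for `a = A.length` and `b = B.length`. -/
def shiftFrom (a b x : ℕ) : ℕ := if x < a then x else x + b

lemma shiftFrom_lt_shiftFrom {a b x y : ℕ} : shiftFrom a b x < shiftFrom a b y ↔ x < y := by
  unfold shiftFrom; split_ifs <;> omega

lemma shiftFrom_le_shiftFrom {a b x y : ℕ} : shiftFrom a b x ≤ shiftFrom a b y ↔ x ≤ y := by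
  unfold shiftFrom; split_ifs <;> omega

lemma shiftFrom_lt_or_le (a b x : ℕ) : shiftFrom a b x < a ∨ a + b ≤ shiftFrom a b x := by
  unfold shiftFrom; split_ifs <;> omega

section Insert
variable (A B C : List Bool)

lemma height_append_append_of_le {k : ℕ} (hk : k ≤ A.length) :
    height (A ++ B ++ C) k = height (A ++ C) k := by
  rw [List.append_assoc, height_append_of_le _ hk, height_append_of_le _ hk]

lemma height_append_append_mid {k : ℕ} (hk : k ≤ B.length) :
    height (A ++ B ++ C) (A.length + k) = height (A ++ B ++ C) A.length + height B k := by
  rw [List.append_assoc, height_append_length_add, height_append_of_le _ hk,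
    height_append_of_le _ le_rfl]

lemma height_append_append_shiftFrom (hB : height B B.length = 0) (x : ℕ) :
    height (A ++ B ++ C) (shiftFrom A.length B.length x) = height (A ++ C) x := by
  unfold shiftFrom
  split_ifs with hx
  · exact height_append_append_of_le A B C hx.le
  · obtain ⟨m, rfl⟩ := Nat.exists_eq_add_of_le (not_lt.mp hx)
    rw [show A.length + m + B.length = (A ++ B).length + m by simp; ring,
      height_append_length_add, height_append_length_add, List.length_append,
      height_append_length_add, hB, add_zero]

lemma height_append_append_shiftFrom_succ (hB : height B B.length = 0) (x : ℕ) :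
    height (A ++ B ++ C) (shiftFrom A.length B.length x + 1) = height (A ++ C) (x + 1) := by
  rcases lt_or_ge x A.length with hx | hx
  · rw [shiftFrom, if_pos hx]
    exact height_append_append_of_le A B C hx
  · rw [← height_append_append_shiftFrom A B C hB, shiftFrom, shiftFrom, if_neg (by omega),
      if_neg (by omega), add_right_comm]

lemma matched_append_append_mid {i j : ℕ} (hj : j < B.length) :
    Matched (A ++ B ++ C) (A.length + i) (A.length + j) ↔ Matched B i j := by
  have hlen : (A ++ B ++ C).length = A.length + B.length + C.length := by
    simp only [List.length_append]
  rw [matched_iff_height, matched_iff_height, hlen, Nat.add_lt_add_iff_left]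
  refine and_congr_right fun hij => and_congr (by omega) ?_
  rw [add_assoc, height_append_append_mid A B C (by omega : j + 1 ≤ B.length),
    height_append_append_mid A B C (by omega : i ≤ B.length), add_left_cancel_iff]
  refine and_congr_right fun _ => ⟨fun hmin k hk hk' => ?_, fun hmin k hk hk' => ?_⟩
  · have := hmin (A.length + k) (by omega) (by omega)
    rwa [height_append_append_mid A B C (by omega), add_lt_add_iff_left] at this
  · obtain ⟨m, rfl⟩ := Nat.exists_eq_add_of_le (by omega : A.length ≤ k)
    rw [height_append_append_mid A B C (by omega), add_lt_add_iff_left]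
    exact hmin m (by omega) (by omega)

lemma matched_shiftFrom_iff (hB : IsDyck B) {i j : ℕ} :
    Matched (A ++ B ++ C) (shiftFrom A.length B.length i) (shiftFrom A.length B.length j) ↔
      Matched (A ++ C) i j := by
  obtain ⟨hB0, hBnonneg⟩ := (isDyck_iff_height B).mp hB
  have hφ := height_append_append_shiftFrom A B C hB0
  have hlen : (A ++ B ++ C).length = A.length + B.length + C.length := by
    simp only [List.length_append]
  have hlen' : (A ++ C).length = A.length + C.length := by simp
  rw [matched_iff_height, matched_iff_height, hφ, height_append_append_shiftFrom_succ A B C hB0,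
    hlen, hlen', shiftFrom_lt_shiftFrom]
  refine and_congr_right fun hij => and_congr (by unfold shiftFrom; split_ifs <;> omega)
    (and_congr_right fun _ => ⟨fun hmin k hk hk' => ?_, fun hmin k hk hk' => ?_⟩)
  · rw [← hφ k]
    exact hmin _ (shiftFrom_lt_shiftFrom.mpr hk) (shiftFrom_le_shiftFrom.mpr hk')
  · by_cases hmid : A.length ≤ k ∧ k < A.length + B.length
    · -- inside the Dyck word `B` the path stays at or above its height at `|A|`, and `i < |A| ≤ j`
      have hiA : i < A.length := by unfold shiftFrom at hk; split_ifs at hk <;> omega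
      have hjA : A.length ≤ j := by unfold shiftFrom at hk'; split_ifs at hk' <;> omega
      obtain ⟨m, rfl⟩ := Nat.exists_eq_add_of_le hmid.1
      rw [height_append_append_mid A B C (by omega), height_append_append_of_le A B C le_rfl]
      linarith [hmin A.length hiA hjA, hBnonneg m]
    · obtain ⟨x, rfl⟩ : ∃ x, shiftFrom A.length B.length x = k :=
        ⟨if k < A.length then k else k - B.length, by unfold shiftFrom; split_ifs <;> omega⟩
      rw [hφ]
      exact hmin x (shiftFrom_lt_shiftFrom.mp hk) (shiftFrom_le_shiftFrom.mp hk')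

lemma not_matchPair_of_mem_mid (hB : IsDyck B) {x y : ℕ} (hx : A.length ≤ x)
    (hx' : x < A.length + B.length) (hy : y < A.length ∨ A.length + B.length ≤ y) :
    ¬ MatchPair (A ++ B ++ C) x y := by
  obtain ⟨hB0, hBnonneg⟩ := (isDyck_iff_height B).mp hB
  obtain ⟨m, rfl⟩ := Nat.exists_eq_add_of_le hx
  rintro (h | h) <;> obtain ⟨hlt, -, heq, hmin⟩ := matched_iff_height.mp h
  · have hend := height_append_append_mid A B C (k := B.length) le_rfl
    rw [height_append_append_mid A B C (by omega)] at hmin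
    linarith [hBnonneg m, hmin (A.length + B.length) (by omega) (by omega)]
  · rw [add_assoc, height_append_append_mid A B C (by omega)] at heq
    linarith [hBnonneg (m + 1), hmin A.length (by omega) (by omega)]

lemma matchPair_append_append_mid {i j : ℕ} (hi : i < B.length) (hj : j < B.length) :
    MatchPair (A ++ B ++ C) (A.length + i) (A.length + j) ↔ MatchPair B i j :=
  or_congr (matched_append_append_mid A B C hj) (matched_append_append_mid A B C hi)

lemma matchPair_shiftFrom_iff (hB : IsDyck B) {i j : ℕ} :
    MatchPair (A ++ B ++ C) (shiftFrom A.length B.length i) (shiftFrom A.length B.length j) ↔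
      MatchPair (A ++ C) i j :=
  or_congr (matched_shiftFrom_iff A B C hB) (matched_shiftFrom_iff A B C hB)

end Insert

lemma zigR_lt {r L p : ℕ} (hp : p < L) : zigR r L p < L := by
  unfold zigR; split_ifs <;> omega

section ZigR
variable {r a b c : ℕ}

lemma zigR_of_lt (hac : a = c + 2 * r) {p : ℕ} (hp : p < a + c) :
    zigR r (a + b + c) p = shiftFrom a b (zigR r (a + c) p) := by
  unfold zigR shiftFrom; split_ifs <;> omega

lemma zigR_add (hac : a = c + 2 * r) {q : ℕ} (hq : q < b) :
    zigR r (a + b + c) (a + c + q) = a + zigR 0 b q := by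
  unfold zigR; split_ifs <;> omega

end ZigR

lemma getElem_psiR (r : ℕ) (w : List Bool) {p : ℕ} (hp : p < (psiR r w).length) :
    (psiR r w)[p] = if ∃ p' < p, MatchPair w (zigR r w.length p') (zigR r w.length p)
      then false else true := by
  simp only [psiR, List.getElem_ofFn]

section Reading
variable {r : ℕ} (A B C : List Bool)

lemma exists_matchPair_zigR_of_lt (hB : IsDyck B) (hAC : A.length = C.length + 2 * r) {p : ℕ}
    (hp : p < (A ++ C).length) :
    (∃ p' < p, MatchPair (A ++ B ++ C) (zigR r (A ++ B ++ C).length p')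
        (zigR r (A ++ B ++ C).length p)) ↔
      ∃ p' < p, MatchPair (A ++ C) (zigR r (A ++ C).length p') (zigR r (A ++ C).length p) := by
  simp only [List.length_append] at hp ⊢
  refine exists_congr fun p' => and_congr_right fun hp' => ?_
  rw [zigR_of_lt hAC hp, zigR_of_lt hAC (hp'.trans hp), matchPair_shiftFrom_iff A B C hB]

lemma exists_matchPair_zigR_add (hB : IsDyck B) (hAC : A.length = C.length + 2 * r) {q : ℕ}
    (hq : q < B.length) :
    (∃ p' < (A ++ C).length + q, MatchPair (A ++ B ++ C) (zigR r (A ++ B ++ C).length p')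
        (zigR r (A ++ B ++ C).length ((A ++ C).length + q))) ↔
      ∃ q' < q, MatchPair B (zigR 0 B.length q') (zigR 0 B.length q) := by
  simp only [List.length_append]
  rw [zigR_add hAC hq]
  constructor
  · rintro ⟨p', hp', h⟩
    rcases lt_or_ge p' (A.length + C.length) with hout | hin
    · rw [zigR_of_lt hAC hout] at h
      exact absurd h.symm (not_matchPair_of_mem_mid A B C hB (by omega)
        (by have := zigR_lt (r := 0) hq; omega) (shiftFrom_lt_or_le _ _ _))
    · obtain ⟨q', rfl⟩ := Nat.exists_eq_add_of_le hin
      rw [zigR_add hAC (by omega), matchPair_append_append_mid A B C (zigR_lt (by omega))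
        (zigR_lt hq)] at h
      exact ⟨q', by omega, h⟩
  · rintro ⟨q', hq', h⟩
    refine ⟨A.length + C.length + q', by omega, ?_⟩
    rwa [zigR_add hAC (hq'.trans hq), matchPair_append_append_mid A B C (zigR_lt (hq'.trans hq))
      (zigR_lt hq)]

end Reading

theorem psiR_append_general (r : ℕ) (A B C : List Bool) (hB : IsDyck B)
    (hAC : A.length = C.length + 2 * r) :
    psiR r (A ++ B ++ C) = psiR r (A ++ C) ++ psiR 0 B := by
  have hlen : (psiR r (A ++ C)).length = (A ++ C).length := List.length_ofFn
  have hlen' : (psiR r (A ++ B ++ C)).length = (A ++ C).length + B.length := by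
    simp [psiR]; omega
  refine List.ext_getElem (by simp [psiR]; omega) fun p hp _ => ?_
  rw [getElem_psiR]
  rcases lt_or_ge p (A ++ C).length with hout | hin
  · rw [List.getElem_append_left (by omega), getElem_psiR]
    exact if_congr (exists_matchPair_zigR_of_lt A B C hB hAC hout) rfl rfl
  · obtain ⟨q, rfl⟩ := Nat.exists_eq_add_of_le hin
    rw [List.getElem_append_right (by omega), getElem_psiR]
    simp only [hlen, Nat.add_sub_cancel_left]
    exact if_congr (exists_matchPair_zigR_add A B C hB hAC (by omega)) rfl rfl

/-- let `r ≥ 0` and let `D = ABC` be a Dyck word with `B` a Dyck word and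
`|A| = |C| + 2r`. Then `Ψ_r(ABC) = Ψ_r(AC)·Ψ_0(B)`. -/
theorem psiR_append (r : ℕ) (A B C : List Bool) (hABC : IsDyck (A ++ B ++ C)) (hB : IsDyck B)
    (hAC : A.length = C.length + 2 * r) :
    psiR r (A ++ B ++ C) = psiR r (A ++ C) ++ psiR 0 B :=
  psiR_append_general r A B C hB hAC

end DyckBij
end

section
/- Let r ≥ 0, let D ∈ D_n be a Dyck word, and let D' = Ψ_r(D). Then the number of multitunnels of D with midpoint at x = n+r (i.e., decompositions D = ABC with B a nonempty Dyck word and length(A) = length(C) + 2r) equals the number of arches of D' in x ≥ 2r (i.e., decompositions D' = X uB'd Y with X, Y, B' Dyck words, uB'd touching height 0 only at its endpoints, and length(X) ≥ 2r). -/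
attribute [local instance] Classical.propDecidable

namespace DyckBij

/-!
Read `D` in the order `σ = σ^{(r)}`. The letter of `Ψ_r(D)` at time `t` is `d` exactly when the
step read at time `t` closes a matched pair of `D` whose other step was read earlier, so
`σ⁻¹ ∘ mate D ∘ σ` pairs the steps of `Ψ_r(D)`, and the height of `Ψ_r(D)` after `p` steps is the
number of matched pairs of `D` split by the set `S_p` of the first `p` steps read. Hence `Ψ_r(D)` is
a Dyck word which returns to height `0` at time `p` iff `S_p` is a union of matched pairs. Returns
occur at even times only, and for `p = 2r + 2b` the complement of `S_p` is the factor `B` of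
`D = A B C` with `|A| = 2r + b`, `|C| = b`; it is a union of matched pairs iff it is a Dyck word,
i.e. iff `A B C` is a multitunnel with midpoint `n + r`. Finally, the returns at times
`2r ≤ p < 2n` are the starting points of the arches of `Ψ_r(D)` in `x ≥ 2r`.
-/

lemma eq_take_append_take_drop_append_drop {α : Type*} (l : List α) (a m : ℕ) :
    l = l.take a ++ (l.drop a).take m ++ l.drop (a + m) := by
  rw [List.append_assoc, ← List.drop_drop, List.take_append_drop, List.take_append_drop]

lemma getD_append_append_length_add (A B C : List Bool) {y : ℕ} (hy : y < B.length) :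
    (A ++ B ++ C).getD (A.length + y) false = B.getD y false := by
  rw [List.append_assoc, List.getD_append_right _ _ _ _ (by omega), Nat.add_sub_cancel_left,
    List.getD_append _ _ _ _ hy]

lemma mapsTo_sdiff_iff_of_leftInvOn {α : Type*} {f : α → α} {s t : Set α}
    (hf : Set.MapsTo f s s) (hff : Set.LeftInvOn f f s) (hts : t ⊆ s) :
    Set.MapsTo f (s \ t) (s \ t) ↔ Set.MapsTo f t t := by
  refine ⟨fun h x hx => by_contra fun hn => ?_, fun h x hx => ⟨hf hx.1, fun hn => ?_⟩⟩
  · have := (h ⟨hf (hts hx), hn⟩).2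
    rw [hff (hts hx)] at this
    exact this hx
  · exact hx.2 (hff hx.1 ▸ h hn)

lemma count_take_eq_nat_count (l : List Bool) (b : Bool) {k : ℕ} (hk : k ≤ l.length) :
    (l.take k).count b = Nat.count (fun i => l.getD i false = b) k := by
  induction k with
  | zero => simp
  | succ k ih =>
    rw [Nat.count_succ, ← ih (by omega), List.take_add_one, List.getElem?_eq_getElem (by omega),
      List.getD_eq_getElem _ _ (by omega), List.count_append]
    simp [List.count_singleton']

lemma isDyck_iff_take {w : List Bool} : IsDyck w ↔
    w.count false = w.count true ∧ ∀ k, (w.take k).count false ≤ (w.take k).count true := by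
  refine and_congr_right fun _ => ⟨fun h k => h _ (List.take_prefix k w), fun h p hp => ?_⟩
  rw [List.prefix_iff_eq_take.1 hp]
  exact h _

structure IsPairing (w : List Bool) (μ : ℕ → ℕ) : Prop where
  lt_length : ∀ i < w.length, μ i < w.length
  apply_apply : ∀ i < w.length, μ (μ i) = i
  ne : ∀ i < w.length, μ i ≠ i
  getD_eq_false_iff : ∀ i < w.length, w.getD i false = false ↔ μ i < i

namespace IsPairing

open Finset

variable {w : List Bool} {μ : ℕ → ℕ} {k : ℕ}

/-- The `u`-steps among the first `k` are the partners of the `d`-steps there, together with the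
steps whose partner comes later. -/
lemma count_take (h : IsPairing w μ) (hk : k ≤ w.length) :
    (w.take k).count true = (w.take k).count false + #{j ∈ range k | k ≤ μ j} := by
  simp only [count_take_eq_nat_count _ _ hk, Nat.count_eq_card_filter_range]
  set F := {i ∈ range k | w.getD i false = false}
  have hinj : Set.InjOn μ F := fun i hi j hj hij => by
    simp only [F, coe_filter, mem_range, Set.mem_ofPred_eq] at hi hj
    rw [← h.apply_apply i (by omega), hij, h.apply_apply j (by omega)]
  have hdisj : Disjoint (F.image μ) {j ∈ range k | k ≤ μ j} := by
    simp only [F, disjoint_left, mem_image, mem_filter, mem_range]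
    rintro _ ⟨i, ⟨hik, hi⟩, rfl⟩ ⟨-, hk'⟩
    rw [h.apply_apply i (by omega)] at hk'
    omega
  have hunion : F.image μ ∪ {j ∈ range k | k ≤ μ j} = {j ∈ range k | w.getD j false = true} := by
    ext j
    simp only [F, mem_union, mem_image, mem_filter, mem_range, ← Bool.not_eq_false]
    constructor
    · rintro (⟨i, ⟨hik, hi⟩, rfl⟩ | ⟨hjk, hj⟩)
      · rw [h.getD_eq_false_iff i (by omega)] at hi
        rw [h.getD_eq_false_iff _ (h.lt_length i (by omega)), h.apply_apply i (by omega)]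
        omega
      · rw [h.getD_eq_false_iff j (by omega)]
        omega
    · rintro ⟨hjk, hj⟩
      rw [h.getD_eq_false_iff j (by omega)] at hj
      have hne := h.ne j (by omega)
      by_cases hμj : μ j < k
      · refine Or.inl ⟨μ j, ⟨hμj, ?_⟩, h.apply_apply j (by omega)⟩
        rw [h.getD_eq_false_iff _ (h.lt_length j (by omega)), h.apply_apply j (by omega)]
        omega
      · exact Or.inr ⟨hjk, by omega⟩
  rw [← hunion, card_union_of_disjoint hdisj, card_image_of_injOn hinj]

lemma count_take_le (h : IsPairing w μ) (k : ℕ) :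
    (w.take k).count false ≤ (w.take k).count true := by
  rcases le_total k w.length with hk | hk
  · rw [h.count_take hk]
    omega
  · have := h.count_take le_rfl
    rw [List.take_length] at this
    rw [List.take_of_length_le hk]
    omega

lemma balanced_take_iff (h : IsPairing w μ) (hk : k ≤ w.length) :
    (w.take k).count false = (w.take k).count true ↔ ∀ j < k, μ j < k := by
  rw [h.count_take hk, left_eq_add, card_eq_zero, filter_eq_empty_iff]
  simp only [mem_range, not_le]

lemma isDyck (h : IsPairing w μ) : IsDyck w := by
  refine isDyck_iff_take.2 ⟨?_, h.count_take_le⟩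
  simpa using (h.balanced_take_iff le_rfl).2 h.lt_length

end IsPairing

lemma IsDyck.take {w : List Bool} (hw : IsDyck w) {k : ℕ}
    (hk : (w.take k).count false = (w.take k).count true) : IsDyck (w.take k) :=
  ⟨hk, fun p hp => hw.2 p (hp.trans (List.take_prefix k w))⟩

lemma IsDyck.drop {w : List Bool} (hw : IsDyck w) {k : ℕ}
    (hk : (w.take k).count false = (w.take k).count true) : IsDyck (w.drop k) := by
  have hsplit := fun b => congrArg (List.count b) (List.take_append_drop k w)
  simp only [List.count_append] at hsplit
  refine isDyck_iff_take.2 ⟨by have := hw.1; grind, fun i => ?_⟩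
  have h := (isDyck_iff_take.1 hw).2 (k + i)
  rw [← List.take_append_drop k (w.take (k + i)), List.take_take, List.drop_take,
    Nat.min_eq_left (by omega), Nat.add_sub_cancel_left] at h
  simp only [List.count_append] at h
  omega

lemma IsDyck.count_true_le_of_suffix {w s : List Bool} (hw : IsDyck w) (hs : s <:+ w) :
    s.count true ≤ s.count false := by
  obtain ⟨p, rfl⟩ := hs
  have := hw.2 p (List.prefix_append p s)
  have := hw.1
  simp only [List.count_append] at *
  omega

section DyckWord

open DyckStep

def boolToStep (b : Bool) : DyckStep := if b then U else D

def stepToBool : DyckStep → Bool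
  | U => true
  | D => false

lemma stepToBool_boolToStep (b : Bool) : stepToBool (boolToStep b) = b := by
  cases b <;> rfl

lemma count_map_boolToStep (l : List Bool) (b : Bool) :
    (l.map boolToStep).count (boolToStep b) = l.count b :=
  List.count_map_of_injective _ _
    (Function.LeftInverse.injective stepToBool_boolToStep) _

lemma count_map_stepToBool (l : List DyckStep) (s : DyckStep) :
    (l.map stepToBool).count (stepToBool s) = l.count s :=
  List.count_map_of_injective _ _ (by rintro (_ | _) (_ | _) h <;> cases h <;> rfl) _

def IsDyck.toDyckWord {w : List Bool} (hw : IsDyck w) : DyckWord where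
  toList := w.map boolToStep
  count_U_eq_count_D :=
    (count_map_boolToStep w true).trans (hw.1.symm.trans (count_map_boolToStep w false).symm)
  count_D_le_count_U k := by
    rw [← List.map_take]
    exact (count_map_boolToStep _ false).trans_le
      (((isDyck_iff_take.1 hw).2 k).trans_eq (count_map_boolToStep _ true).symm)

lemma IsDyck.map_stepToBool_toDyckWord {w : List Bool} (hw : IsDyck w) :
    hw.toDyckWord.toList.map stepToBool = w := by
  simp [IsDyck.toDyckWord, Function.comp_def, stepToBool_boolToStep]

lemma isDyck_map_stepToBool (p : DyckWord) : IsDyck (p.toList.map stepToBool) := by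
  refine isDyck_iff_take.2 ⟨?_, fun k => ?_⟩
  · exact (count_map_stepToBool _ D).trans
      (p.count_U_eq_count_D.symm.trans (count_map_stepToBool _ U).symm)
  · rw [← List.map_take]
    exact (count_map_stepToBool _ D).trans_le
      ((p.count_D_le_count_U k).trans_eq (count_map_stepToBool _ U).symm)

lemma IsDyck.eq_cons_append {w : List Bool} (hw : IsDyck w) (hne : w ≠ []) :
    ∃ M C, IsDyck M ∧ IsDyck C ∧ w = true :: (M ++ false :: C) := by
  have hp : hw.toDyckWord ≠ 0 := by
    rw [← DyckWord.toList_ne_nil]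
    simpa [IsDyck.toDyckWord] using hne
  refine ⟨_, _, isDyck_map_stepToBool hw.toDyckWord.insidePart,
    isDyck_map_stepToBool hw.toDyckWord.outsidePart, ?_⟩
  have h := congrArg (fun p : DyckWord => p.toList.map stepToBool)
    (DyckWord.nest_insidePart_add_outsidePart hp)
  rw [hw.map_stepToBool_toDyckWord] at h
  refine h.symm.trans ?_
  change List.map stepToBool ([U] ++ _ ++ [D] ++ _) = _
  simp [stepToBool]

end DyckWord

lemma IsDyck.exists_arch_iff {w : List Bool} (hw : IsDyck w) {p : ℕ} :
    (∃ X B Y : List Bool, IsDyck X ∧ IsDyck B ∧ IsDyck Y ∧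
      w = X ++ true :: (B ++ false :: Y) ∧ X.length = p) ↔
    p < w.length ∧ (w.take p).count false = (w.take p).count true := by
  constructor
  · rintro ⟨X, B, Y, hX, -, -, rfl, rfl⟩
    simpa using hX.1
  · rintro ⟨hp, hbal⟩
    obtain ⟨B, Y, hB, hY, hdrop⟩ :=
      (hw.drop hbal).eq_cons_append (by simpa [List.drop_eq_nil_iff] using hp)
    exact ⟨_, B, Y, hw.take hbal, hB, hY, by rw [← hdrop, List.take_append_drop],
      by simp only [List.length_take]; omega⟩

lemma IsDyck.eq_of_append_false_cons {B B' C C' : List Bool} (hB : IsDyck B) (hB' : IsDyck B')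
    (h : B ++ false :: C = B' ++ false :: C') : B = B' := by
  wlog hle : B.length ≤ B'.length generalizing B B' C C'
  · exact (this hB' hB h.symm (by omega)).symm
  rcases hle.lt_or_eq with hlt | heq
  · have h1 : B ++ [false] <+: B' ++ false :: C' := by
      rw [← h]
      exact (List.prefix_append_right_inj B).2 (by simp)
    have hpre : B ++ [false] <+: B' :=
      List.prefix_of_prefix_length_le h1 (List.prefix_append _ _) (by simpa)
    have := hB'.2 _ hpre
    simp [List.count_append, hB.1] at this
  · exact (List.append_inj h heq).1

lemma IsDyck.eq_of_append_true_cons {A A' B B' : List Bool} (hB : IsDyck B) (hB' : IsDyck B')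
    (h : A ++ true :: B = A' ++ true :: B') : A = A' := by
  wlog hle : A.length ≤ A'.length generalizing A A' B B'
  · exact (this hB' hB h.symm (by omega)).symm
  rcases hle.lt_or_eq with hlt | heq
  · have hlen := congrArg List.length h
    simp only [List.length_append, List.length_cons] at hlen
    have h1 : true :: B' <:+ A ++ true :: B := by
      rw [h]
      exact List.suffix_append _ _
    have hsuf : true :: B' <:+ B := List.suffix_of_suffix_length_le h1
      ((List.suffix_cons _ _).trans (List.suffix_append _ _))
      (by simp only [List.length_cons]; omega)
    have := hB.count_true_le_of_suffix hsuf
    simp [hB'.1] at this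
  · exact (List.append_inj h heq).1

namespace Matched

variable {w : List Bool} {i j : ℕ}

lemma lt (h : Matched w i j) : i < j := by
  obtain ⟨A, B, C, -, -, -, rfl⟩ := h
  omega

lemma lt_length (h : Matched w i j) : j < w.length := by
  obtain ⟨A, B, C, -, rfl, rfl, rfl⟩ := h
  simp only [List.length_append, List.length_cons]
  omega

lemma getD_left (h : Matched w i j) : w.getD i false = true := by
  obtain ⟨A, B, C, -, rfl, rfl, -⟩ := h
  simp

lemma getD_right (h : Matched w i j) : w.getD j false = false := by
  obtain ⟨A, B, C, -, rfl, rfl, rfl⟩ := h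
  rw [show A ++ true :: (B ++ false :: C) = (A ++ true :: B) ++ false :: C by simp]
  rw [List.getD_append_right _ _ _ _ (by simp only [List.length_append, List.length_cons]; omega)]
  simp [show A.length + B.length + 1 - (A.length + (B.length + 1)) = 0 by omega]

lemma append_append (h : Matched w i j) (A C : List Bool) :
    Matched (A ++ w ++ C) (A.length + i) (A.length + j) := by
  obtain ⟨A', B', C', hB', rfl, rfl, rfl⟩ := h
  exact ⟨A ++ A', B', C' ++ C, hB', by simp, by simp, by omega⟩

lemma right_unique {j' : ℕ} (h : Matched w i j) (h' : Matched w i j') : j = j' := by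
  obtain ⟨A, B, C, hB, rfl, rfl, rfl⟩ := h
  obtain ⟨A', B', C', hB', hw, hA, rfl⟩ := h'
  have hBC := (List.cons.inj (List.append_inj hw hA.symm).2).2
  rw [hB.eq_of_append_false_cons hB' hBC]

lemma left_unique {i' : ℕ} (h : Matched w i j) (h' : Matched w i' j) : i = i' := by
  obtain ⟨A, B, C, hB, rfl, rfl, hj⟩ := h
  obtain ⟨A', B', C', hB', hw, rfl, hj'⟩ := h'
  have hw' : (A ++ true :: B) ++ false :: C = (A' ++ true :: B') ++ false :: C' := by simpa using hw
  have hlen : (A ++ true :: B).length = (A' ++ true :: B').length := by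
    simp only [List.length_append, List.length_cons]
    omega
  rw [hB.eq_of_append_true_cons hB' (List.append_inj hw' hlen).1]

end Matched

namespace MatchPair

variable {w : List Bool} {i j : ℕ}

lemma symm (h : MatchPair w i j) : MatchPair w j i := Or.symm h

lemma lt_length (h : MatchPair w i j) : j < w.length :=
  h.elim Matched.lt_length fun h => h.lt.trans h.lt_length

lemma append_append (h : MatchPair w i j) (A C : List Bool) :
    MatchPair (A ++ w ++ C) (A.length + i) (A.length + j) :=
  h.imp (·.append_append A C) (·.append_append A C)

lemma unique {k : ℕ} (h : MatchPair w i j) (h' : MatchPair w i k) : j = k := by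
  rcases h with h | h <;> rcases h' with h' | h'
  · exact h.right_unique h'
  · nomatch h.getD_left.symm.trans h'.getD_right
  · nomatch h'.getD_left.symm.trans h.getD_right
  · exact h.left_unique h'

end MatchPair

lemma IsDyck.exists_matchPair {w : List Bool} (hw : IsDyck w) {i : ℕ} (hi : i < w.length) :
    ∃ j, MatchPair w i j := by
  induction hl : w.length using Nat.strong_induction_on generalizing w i with
  | _ n ih =>
  obtain ⟨M, C, hM, hC, rfl⟩ := hw.eq_cons_append (List.ne_nil_of_length_pos (by omega))
  simp only [List.length_cons, List.length_append] at hl hi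
  have hclose : Matched (true :: (M ++ false :: C)) 0 (M.length + 1) :=
    ⟨[], M, C, hM, rfl, rfl, by simp⟩
  rcases (show i = 0 ∨ (1 ≤ i ∧ i ≤ M.length) ∨ i = M.length + 1 ∨ M.length + 2 ≤ i by omega)
    with rfl | hi | rfl | hi
  · exact ⟨_, .inl hclose⟩
  · obtain ⟨j, hj⟩ := ih M.length (by omega) hM (i := i - 1) (by omega) rfl
    have := hj.append_append [true] (false :: C)
    rw [List.singleton_append, List.cons_append, List.length_singleton,
      show 1 + (i - 1) = i by omega] at this
    exact ⟨_, this⟩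
  · exact ⟨0, .inr hclose⟩
  · obtain ⟨j, hj⟩ := ih C.length (by omega) hC (i := i - (M.length + 2)) (by omega) rfl
    have := hj.append_append (true :: (M ++ [false])) []
    rw [show true :: (M ++ [false]) ++ C ++ [] = true :: (M ++ false :: C) by simp,
      show (true :: (M ++ [false])).length + (i - (M.length + 2)) = i by
        simp only [List.length_cons, List.length_append, List.length_nil]
        omega] at this
    exact ⟨_, this⟩

/-- Junk value `0` when position `i` of `w` has no match. -/
noncomputable def mate (w : List Bool) (i : ℕ) : ℕ :=
  if h : ∃ j, MatchPair w i j then h.choose else 0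

section mate

variable {w : List Bool} {i j : ℕ}

lemma IsDyck.matchPair_mate (hw : IsDyck w) (hi : i < w.length) : MatchPair w i (mate w i) := by
  have h := hw.exists_matchPair hi
  rw [mate, dif_pos h]
  exact h.choose_spec

lemma IsDyck.matchPair_iff (hw : IsDyck w) (hi : i < w.length) :
    MatchPair w i j ↔ mate w i = j :=
  ⟨(hw.matchPair_mate hi).unique, fun h => h ▸ hw.matchPair_mate hi⟩

lemma IsDyck.mate_lt_length (hw : IsDyck w) (hi : i < w.length) : mate w i < w.length :=
  (hw.matchPair_mate hi).lt_length

lemma IsDyck.isPairing_mate (hw : IsDyck w) : IsPairing w (mate w) where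
  lt_length _ := hw.mate_lt_length
  apply_apply _ hi := (hw.matchPair_iff (hw.mate_lt_length hi)).1 (hw.matchPair_mate hi).symm
  ne i hi := by
    rcases hw.matchPair_mate hi with h | h
    · exact h.lt.ne'
    · exact h.lt.ne
  getD_eq_false_iff i hi := by
    rcases hw.matchPair_mate hi with h | h
    · rw [h.getD_left]
      simp [h.lt.not_gt]
    · rw [h.getD_right]
      simp [h.lt]

end mate

lemma IsDyck.isDyck_iff_mapsTo_mate {A B C : List Bool} (hw : IsDyck (A ++ B ++ C)) :
    IsDyck B ↔ Set.MapsTo (mate (A ++ B ++ C)) (Set.Ico A.length (A.length + B.length))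
      (Set.Ico A.length (A.length + B.length)) := by
  have hlen : (A ++ B ++ C).length = A.length + B.length + C.length := by
    simp only [List.length_append]
  constructor
  · rintro hB x ⟨hx₁, hx₂⟩
    obtain ⟨j, hj⟩ := hB.exists_matchPair (i := x - A.length) (by omega)
    have hjB := hj.lt_length
    have := hj.append_append A C
    rw [Nat.add_sub_cancel' hx₁, hw.matchPair_iff (by omega)] at this
    rw [this]
    exact ⟨by omega, by omega⟩
  · intro hmaps
    have hmate : ∀ y < B.length, A.length ≤ mate (A ++ B ++ C) (A.length + y) ∧
        mate (A ++ B ++ C) (A.length + y) < A.length + B.length :=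
      fun y hy => hmaps ⟨by omega, by omega⟩
    have hpair := hw.isPairing_mate
    refine IsPairing.isDyck (μ := fun y => mate (A ++ B ++ C) (A.length + y) - A.length)
      ⟨fun y hy => ?_, fun y hy => ?_, fun y hy => ?_, fun y hy => ?_⟩
    · have := hmate y hy
      omega
    · have := hmate y hy
      simp only [Nat.add_sub_cancel' this.1]
      rw [hpair.apply_apply _ (by omega), Nat.add_sub_cancel_left]
    · have := hmate y hy
      have := hpair.ne (A.length + y) (by omega)
      omega
    · have := hmate y hy
      rw [← getD_append_append_length_add A B C hy, hpair.getD_eq_false_iff _ (by omega)]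
      omega

lemma zigR_bijOn (r L : ℕ) : Set.BijOn (zigR r L) (Set.Iio L) (Set.Iio L) := by
  refine ⟨fun p hp => ?_, fun p hp q hq h => ?_, fun x hx => ?_⟩
  · simp only [Set.mem_Iio] at *
    unfold zigR
    split_ifs <;> omega
  · simp only [Set.mem_Iio] at *
    unfold zigR at h
    split_ifs at h <;> omega
  · simp only [Set.mem_Iio] at hx
    refine ⟨if x < 2 * r then x else if 2 * x < L + 2 * r then 2 * x - 2 * r
      else 2 * L + 2 * r - 2 * x - 1, ?_, ?_⟩
    · simp only [Set.mem_Iio]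
      split_ifs <;> omega
    · unfold zigR
      split_ifs <;> omega

lemma zigR_image_Iio {r L b : ℕ} (h : 2 * r + 2 * b ≤ L) :
    zigR r L '' Set.Iio (2 * r + 2 * b) = Set.Iio L \ Set.Ico (2 * r + b) (L - b) := by
  ext x
  simp only [Set.mem_image, Set.mem_Iio, Set.mem_sdiff, Set.mem_Ico]
  constructor
  · rintro ⟨p, hp, rfl⟩
    unfold zigR
    split_ifs <;> omega
  · rintro ⟨hx, hx'⟩
    refine ⟨if x < 2 * r then x else if x < 2 * r + b then 2 * x - 2 * r
      else 2 * L + 2 * r - 2 * x - 1, ?_, ?_⟩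
    · split_ifs <;> omega
    · unfold zigR
      split_ifs <;> omega

lemma length_psiR (r : ℕ) (w : List Bool) : (psiR r w).length = w.length := by
  simp [psiR]

lemma psiR_getD_eq_false_iff {r t : ℕ} {w : List Bool} (ht : t < w.length) :
    (psiR r w).getD t false = false ↔
      ∃ t' < t, MatchPair w (zigR r w.length t') (zigR r w.length t) := by
  rw [List.getD_eq_getElem _ _ (by rwa [length_psiR])]
  simp only [psiR, List.getElem_ofFn]
  split_ifs with h <;> simp [h]

section psiR

variable {r : ℕ} {D : List Bool}

/-- A matched pair of `D` is read by `σ^{(r)}` as a `u` followed by a `d` of `Ψ_r(D)`, so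
`σ⁻¹ ∘ mate D ∘ σ` pairs the steps of `Ψ_r(D)`. -/
lemma IsDyck.isPairing_psiR (hD : IsDyck D) : IsPairing (psiR r D)
    (fun t => Function.invFunOn (zigR r D.length) (Set.Iio D.length)
      (mate D (zigR r D.length t))) := by
  have hσ := zigR_bijOn r D.length
  have hinv := hσ.invOn_invFunOn
  have hτ : Set.MapsTo (Function.invFunOn (zigR r D.length) (Set.Iio D.length))
      (Set.Iio D.length) (Set.Iio D.length) := fun x hx => Function.invFunOn_mem (hσ.surjOn hx)
  have hpair := hD.isPairing_mate
  have hmate : ∀ t < D.length, mate D (zigR r D.length t) < D.length :=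
    fun t ht => hpair.lt_length _ (hσ.mapsTo ht)
  refine ⟨fun t ht => ?_, fun t ht => ?_, fun t ht heq => ?_, fun t ht => ?_⟩ <;>
    rw [length_psiR] at ht
  · rw [length_psiR]
    exact hτ (hmate t ht)
  · rw [hinv.2 (hmate t ht), hpair.apply_apply _ (hσ.mapsTo ht), hinv.1 ht]
  · apply hpair.ne _ (hσ.mapsTo ht)
    conv_rhs => rw [← heq]
    exact (hinv.2 (hmate t ht)).symm
  · rw [psiR_getD_eq_false_iff ht]
    have hiff : ∀ t', MatchPair D (zigR r D.length t') (zigR r D.length t) ↔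
        mate D (zigR r D.length t) = zigR r D.length t' := fun t' =>
      ⟨fun h => (hD.matchPair_iff (hσ.mapsTo ht)).1 h.symm,
        fun h => ((hD.matchPair_iff (hσ.mapsTo ht)).2 h).symm⟩
    simp only [hiff]
    constructor
    · rintro ⟨t', ht', he⟩
      rw [he, hinv.1 (by simp only [Set.mem_Iio]; omega)]
      exact ht'
    · intro h
      exact ⟨_, h, (hinv.2 (hmate t ht)).symm⟩

lemma IsDyck.psiR_balanced_take_iff (hD : IsDyck D) {p : ℕ} (hp : p ≤ D.length) :
    ((psiR r D).take p).count false = ((psiR r D).take p).count true ↔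
      Set.MapsTo (mate D) (zigR r D.length '' Set.Iio p) (zigR r D.length '' Set.Iio p) := by
  have hinv := (zigR_bijOn r D.length).invOn_invFunOn
  rw [hD.isPairing_psiR.balanced_take_iff (by rwa [length_psiR])]
  constructor
  · rintro h _ ⟨t, ht, rfl⟩
    exact ⟨_, h t ht, hinv.2 (hD.mate_lt_length ((zigR_bijOn r D.length).mapsTo (by
      simp only [Set.mem_Iio] at ht ⊢; omega)))⟩
  · intro h t ht
    obtain ⟨t', ht', he⟩ := h ⟨t, ht, rfl⟩
    rw [← he, hinv.1 (by simp only [Set.mem_Iio] at ht' ⊢; omega)]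
    exact ht'

lemma IsDyck.psiR_balanced_take_iff_isDyck {b : ℕ} (hD : IsDyck D)
    (hb : 2 * r + 2 * b ≤ D.length) :
    ((psiR r D).take (2 * r + 2 * b)).count false = ((psiR r D).take (2 * r + 2 * b)).count true ↔
      IsDyck ((D.drop (2 * r + b)).take (D.length - 2 * r - 2 * b)) := by
  have hpair := hD.isPairing_mate
  have hsplit := eq_take_append_take_drop_append_drop D (2 * r + b) (D.length - 2 * r - 2 * b)
  have hfactor := (hsplit ▸ hD : IsDyck _).isDyck_iff_mapsTo_mate
  rw [← hsplit] at hfactor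
  simp only [List.length_take, List.length_drop] at hfactor
  rw [Nat.min_eq_left (by omega), Nat.min_eq_left (by omega),
    show 2 * r + b + (D.length - 2 * r - 2 * b) = D.length - b by omega] at hfactor
  rw [hD.psiR_balanced_take_iff hb, zigR_image_Iio hb, hfactor,
    mapsTo_sdiff_iff_of_leftInvOn (s := Set.Iio D.length) (fun _ => hD.mate_lt_length)
      hpair.apply_apply
      (fun x hx => by simp only [Set.mem_Ico, Set.mem_Iio] at hx ⊢; omega)]

end psiR

def midDyckFactors (r : ℕ) (D : List Bool) : Set ℕ :=
  {b | 2 * r + 2 * b < D.length ∧ IsDyck ((D.drop (2 * r + b)).take (D.length - 2 * r - 2 * b))}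

lemma mtunEq_eq_ncard_midDyckFactors (r : ℕ) (D : List Bool) :
    mtunEq r D = (midDyckFactors r D).ncard := by
  rw [mtunEq, ← Set.ncard_image_of_injective _
    (f := fun b => (2 * r + b, D.length - 2 * r - 2 * b))
    fun b b' h => by simpa using congrArg Prod.fst h]
  congr 1
  ext ⟨a, m⟩
  simp only [midDyckFactors, Set.mem_ofPred_eq, Set.mem_image, Prod.mk.injEq]
  constructor
  · rintro ⟨A, B, C, hB, hne, rfl, rfl, rfl, hAC⟩
    have hlen := List.length_pos_iff.2 hne
    have hABC : (A ++ B ++ C).length = A.length + B.length + C.length := by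
      simp only [List.length_append]
    refine ⟨C.length, ⟨by omega, ?_⟩, by omega, by omega⟩
    rwa [List.append_assoc, List.drop_left' (by omega), List.length_append, List.length_append,
      show A.length + (B.length + C.length) - 2 * r - 2 * C.length = B.length by omega,
      List.take_left' rfl]
  · rintro ⟨b, ⟨hb, hB⟩, rfl, rfl⟩
    refine ⟨_, _, _, hB, ?_, eq_take_append_take_drop_append_drop D _ _, ?_, ?_, ?_⟩ <;>
      simp only [List.length_take, List.length_drop, ne_eq, ← List.length_eq_zero_iff] <;>
      omega

lemma IsDyck.numArchesAfter_psiR_eq_ncard_midDyckFactors {r : ℕ} {D : List Bool}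
    (hD : IsDyck D) :
    numArchesAfter r (psiR r D) = (midDyckFactors r D).ncard := by
  have hW := hD.isPairing_psiR (r := r) |>.isDyck
  rw [numArchesAfter]
  conv_rhs => rw [← Set.ncard_image_of_injective _
    (f := fun b => 2 * r + 2 * b) fun b b' h => by simp only at h; omega]
  congr 1
  ext p
  simp only [midDyckFactors, Set.mem_ofPred_eq, Set.mem_image]
  constructor
  · rintro ⟨X, B, Y, hX, hB, hY, hw, rfl, hr⟩
    obtain ⟨hp, hbal⟩ := hW.exists_arch_iff.1 ⟨X, B, Y, hX, hB, hY, hw, rfl⟩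
    rw [length_psiR] at hp
    have hsum := List.count_false_add_count_true ((psiR r D).take X.length)
    rw [List.length_take, length_psiR, Nat.min_eq_left hp.le] at hsum
    obtain ⟨b, hb⟩ : ∃ b, X.length = 2 * r + 2 * b := ⟨(X.length - 2 * r) / 2, by omega⟩
    rw [hb] at hbal hp
    exact ⟨b, ⟨hp, (hD.psiR_balanced_take_iff_isDyck hp.le).1 hbal⟩, hb.symm⟩
  · rintro ⟨b, ⟨hb, hfactor⟩, rfl⟩
    obtain ⟨X, B, Y, hX, hB, hY, hw, hlen⟩ := hW.exists_arch_iff.2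
      ⟨by rwa [length_psiR], (hD.psiR_balanced_take_iff_isDyck hb.le).2 hfactor⟩
    exact ⟨X, B, Y, hX, hB, hY, hw, hlen, by omega⟩

theorem mtunEq_eq_numArchesAfter_general (r : ℕ) (D : List Bool) (hD : IsDyck D) :
    mtunEq r D = numArchesAfter r (psiR r D) := by
  rw [mtunEq_eq_ncard_midDyckFactors, hD.numArchesAfter_psiR_eq_ncard_midDyckFactors]

/-- multitunnels of `D ∈ D_n` with midpoint at `x = n + r`
(i.e. `|A| = |C| + 2r`) correspond in number to arches of `D' = Ψ_r(D)` in `x ≥ 2r`. -/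
theorem mtunEq_eq_numArchesAfter (r n : ℕ) (D : List Bool) (hD : IsDyck D)
    (hlen : D.length = 2 * n) :
    mtunEq r D = numArchesAfter r (psiR r D) :=
  mtunEq_eq_numArchesAfter_general r D hD

end DyckBij
end
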